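/- arXiv:2110.14858 — 6 statements merged into one kernel-verified Lean document; each statement's English description precedes it below -/
import Mathlib

section
/- Let Σ = {a_1, a_2, …, a_s} be a finite alphabet and let w ∈ Σ*. Then the sum over all permutations σ of {1,…,s} of the number of occurrences of a_{σ(1)}a_{σ(2)}⋯a_{σ(s)} as a scattered subword of w equals the product ∏_{i=1}^{s} |w|_{a_i}. -/
/-- The number of occurrences of `v` as a scattered subword (subsequence) of `w`:
the number of strictly increasing sequences of positions in `w` spelling out `v`. -/
def subwordCount {α : Type*} [DecidableEq α] (w v : List α) : ℕ :=
  w.sublists.count v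

/-- The conjugacy class (circular word) `[w]` of `w`: the set of all cyclic shifts of `w`. -/
def conjClass {α : Type*} [DecidableEq α] (w : List α) : Finset (List α) :=
  insert w ((Finset.range w.length).image w.rotate)

/-- The average subword count of `v` in the circular word `[w]`:
`|[w]|_v = (1/|[w]|) ∑_{u ∈ [w]} |u|_v`. -/
def circCount {α : Type*} [DecidableEq α] (w v : List α) : ℚ :=
  (∑ u ∈ conjClass w, (subwordCount u v : ℚ)) / ((conjClass w).card : ℚ)

/-- The Parikh matrix of the letter `q` of the ordered alphabet `Fin s`:
the identity matrix with an extra `1` in entry `(q, q+1)`. -/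
def parikhLetter {s : ℕ} (q : Fin s) : Matrix (Fin (s + 1)) (Fin (s + 1)) ℚ :=
  1 + Matrix.single q.castSucc q.succ 1

/-- The Parikh matrix mapping over the ordered alphabet `Fin s` (a monoid morphism). -/
def parikhMatrix {s : ℕ} (w : List (Fin s)) : Matrix (Fin (s + 1)) (Fin (s + 1)) ℚ :=
  (w.map parikhLetter).prod

/-- The Parikh matrix of the circular word `[w]`:
`Ψ([w]) = (1/|[w]|) ∑_{u ∈ [w]} Ψ(u)`. -/
def circParikh {s : ℕ} (w : List (Fin s)) : Matrix (Fin (s + 1)) (Fin (s + 1)) ℚ :=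
  (((conjClass w).card : ℚ))⁻¹ • ∑ u ∈ conjClass w, parikhMatrix u

/-- The alternate matrix: `(i,j)` entry is `(-1)^(i+j)` times the `(i,j)` entry of `A`. -/
def altMatrix {n : ℕ} (A : Matrix (Fin n) (Fin n) ℚ) : Matrix (Fin n) (Fin n) ℚ :=
  Matrix.of fun i j => (-1 : ℚ) ^ (i.val + j.val) * A i j

/-- The word `a_i a_{i+1} ⋯ a_j` over the ordered alphabet `Fin s`. -/
def segWord {s : ℕ} (i j : Fin s) : List (Fin s) :=
  (List.range (j.val - i.val + 1)).attach.map fun t =>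
    ⟨i.val + t.1, by
      have ht := List.mem_range.mp t.2
      have hi := i.isLt
      have hj := j.isLt
      omega⟩

/-!
Call a list enumerating a finset `S` of letters without repetition an arrangement of `S`.
Peel off the first letter `a` of the word `a w`: an occurrence of an arrangement `p` either avoids
that position, or uses it, and then `p = a :: q` with `q` an arrangement of `S \ {a}` occurring
in `w`. Summed over all arrangements this gives
`∑ₚ |a w|_p = ∑ₚ |w|_p + [a ∈ S] ∑_q |w|_q`, which, by induction on the word, is exactly the
expansion `∏_{x ∈ S} (|w|_x + [x = a]) = ∏_{x ∈ S} |w|_x + [a ∈ S] ∏_{x ∈ S \ {a}} |w|_x`.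
The arrangements of the whole alphabet `Fin s` are the words `List.ofFn σ`, `σ ∈ Sym(s)`.
-/

open Finset

theorem Finset.prod_add_ite_eq {α R : Type*} [DecidableEq α] [CommSemiring R] (S : Finset α)
    (g : α → R) (a : α) :
    ∏ x ∈ S, (g x + if x = a then 1 else 0) =
      ∏ x ∈ S, g x + if a ∈ S then ∏ x ∈ S.erase a, g x else 0 := by
  split_ifs with ha
  · have hg : ∏ x ∈ S.erase a, (g x + if x = a then 1 else 0) = ∏ x ∈ S.erase a, g x :=
      prod_congr rfl fun x hx => by simp [ne_of_mem_erase hx]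
    rw [← mul_prod_erase S _ ha, ← mul_prod_erase S g ha, hg]
    simp [add_mul]
  · exact (prod_congr rfl fun x hx => by simp [ne_of_mem_of_not_mem hx ha]).trans
      (add_zero _).symm

section Arrangements

variable {α : Type*}

def arrangements (S : Finset α) : Finset (List α) :=
  ⟨S.val.lists, Multiset.lists_nodup_finset S⟩

theorem mem_arrangements {S : Finset α} {p : List α} : p ∈ arrangements S ↔ S.val = p :=
  Multiset.mem_lists_iff _ _

theorem arrangements_empty : arrangements (∅ : Finset α) = {[]} := by
  ext p; simp [mem_arrangements, eq_comm]

theorem ne_nil_of_mem_arrangements {S : Finset α} (hS : S.Nonempty) {p : List α}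
    (hp : p ∈ arrangements S) : p ≠ [] := by
  rintro rfl
  simp [mem_arrangements, hS.ne_empty] at hp

variable [DecidableEq α]

theorem filter_head_arrangements {S : Finset α} {a : α} (ha : a ∈ S) :
    (arrangements S).filter (·.head? = some a) =
      (arrangements (S.erase a)).map ⟨List.cons a, List.cons_injective⟩ := by
  have hS : S.val = a ::ₘ (S.erase a).val := by
    rw [Finset.erase_val, Multiset.cons_erase (mem_val.mpr ha)]
  ext p
  simp only [mem_filter, mem_arrangements, mem_map, Function.Embedding.coeFn_mk, hS]
  constructor
  · rintro ⟨hp, hhead⟩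
    obtain ⟨q, rfl⟩ : ∃ q, p = a :: q := ⟨p.tail, (List.cons_head?_tail hhead).symm⟩
    exact ⟨q, Multiset.cons_inj_right a |>.mp (by simpa using hp), rfl⟩
  · rintro ⟨q, hq, rfl⟩
    exact ⟨by rw [← Multiset.cons_coe, ← hq], rfl⟩

theorem filter_head_arrangements_of_notMem {S : Finset α} {a : α} (ha : a ∉ S) :
    (arrangements S).filter (·.head? = some a) = ∅ := by
  refine filter_eq_empty_iff.mpr fun p hp hhead => ha ?_
  obtain ⟨q, rfl⟩ : ∃ q, p = a :: q := ⟨p.tail, (List.cons_head?_tail hhead).symm⟩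
  rw [← mem_val, mem_arrangements.mp hp]
  exact Multiset.mem_cons_self a q

theorem sum_arrangements_ite_head {M : Type*} [AddCommMonoid M] (f : List α → M) (S : Finset α)
    (a : α) :
    ∑ p ∈ arrangements S, (if p.head? = some a then f p.tail else 0) =
      if a ∈ S then ∑ q ∈ arrangements (S.erase a), f q else 0 := by
  rw [← sum_filter]
  split_ifs with ha
  · rw [filter_head_arrangements ha, sum_map]
    rfl
  · rw [filter_head_arrangements_of_notMem ha, sum_empty]

end Arrangements

theorem arrangements_univ_fin (n : ℕ) :
    arrangements (univ : Finset (Fin n)) =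
      univ.image fun σ : Equiv.Perm (Fin n) => List.ofFn σ := by
  ext p
  simp only [mem_arrangements, mem_image, mem_univ, true_and, val_univ_fin, Multiset.coe_eq_coe]
  constructor
  · intro hp
    have hlen : p.length = n := by simpa using hp.length_eq.symm
    have hnodup : p.Nodup := hp.nodup_iff.mp (List.nodup_finRange n)
    let σ := (finCongr hlen.symm).trans
      (List.Nodup.getEquivOfForallMemList p hnodup fun x => hp.mem_iff.mp (List.mem_finRange x))
    exact ⟨σ, List.ext_get (by simp [hlen]) fun i _ _ => by simp [σ]⟩
  · rintro ⟨σ, rfl⟩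
    exact (σ.ofFn_comp_perm id).symm

section SubwordCount

variable {α : Type*} [DecidableEq α]

theorem subwordCount_cons (a : α) (w v : List α) :
    subwordCount (a :: w) v =
      subwordCount w v + if v.head? = some a then subwordCount w v.tail else 0 := by
  unfold subwordCount
  rw [(List.sublists_cons_perm_append a w).count_eq, List.count_append]
  congr 1
  split_ifs with h
  · obtain ⟨t, rfl⟩ : ∃ t, v = a :: t := ⟨v.tail, (List.cons_head?_tail h).symm⟩
    simp [List.count_map_of_injective _ _ List.cons_injective]
  · exact List.count_eq_zero.mpr (by aesop)

theorem subwordCount_nil_right (w : List α) : subwordCount w [] = 1 := by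
  induction w with
  | nil => rfl
  | cons a w ih => simp [subwordCount_cons, ih]

theorem subwordCount_cons_singleton (a b : α) (w : List α) :
    subwordCount (a :: w) [b] = subwordCount w [b] + if b = a then 1 else 0 := by
  simp [subwordCount_cons, subwordCount_nil_right]

theorem sum_arrangements_subwordCount (w : List α) (S : Finset α) :
    ∑ p ∈ arrangements S, subwordCount w p = ∏ x ∈ S, subwordCount w [x] := by
  induction w generalizing S with
  | nil =>
    rcases S.eq_empty_or_nonempty with rfl | hS
    · simp [arrangements_empty, subwordCount_nil_right]
    · obtain ⟨x, hx⟩ := hS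
      rw [sum_eq_zero fun p hp => ?_, prod_eq_zero hx (by simp [subwordCount])]
      simp [subwordCount, ne_nil_of_mem_arrangements ⟨x, hx⟩ hp]
  | cons a w ih =>
    rw [prod_congr rfl fun x _ => subwordCount_cons_singleton a x w, prod_add_ite_eq,
      ← ih S, ← ih (S.erase a), ← sum_arrangements_ite_head, ← sum_add_distrib]
    exact sum_congr rfl fun p _ => subwordCount_cons a w p

end SubwordCount

/-- Proposition 1 (combinatorial property of words): for a word `w` over the alphabet
`{a_1, …, a_s} = Fin s`, the sum over all permutations `σ` of the number of occurrences
of `a_{σ(1)} ⋯ a_{σ(s)}` as a scattered subword of `w` equals `∏ i, |w|_{a_i}`. -/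
theorem stmt_0 (s : ℕ) (w : List (Fin s)) :
    ∑ σ : Equiv.Perm (Fin s), subwordCount w (List.ofFn fun k => σ k) =
      ∏ i : Fin s, subwordCount w [i] := by
  rw [← sum_arrangements_subwordCount, arrangements_univ_fin,
    sum_image fun σ _ τ _ h => Equiv.ext (congrFun (List.ofFn_injective h))]
end

section
/- Let Σ be an alphabet and v, w, w' ∈ Σ* with w' a cyclic shift of w (i.e., w and w' are conjugates). Then the sum of |w|_u over all conjugates u of v equals the sum of |w'|_u over all conjugates u of v; that is, the direct count of occurrences of v as a subword of the circular word [w] is independent of the chosen representative of [w]. -/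
/-! Summing `|w|_u` over a set of words closed under rotation counts the subsequences of `w`
lying in that set. Moving the first letter `a` of `w = a x` to the end trades the
subsequences `a t` for the subsequences `t a`, and each lies in the set iff the other does. -/

namespace List

variable {α : Type*}

theorem countP_sublists_cons (p : List α → Bool) (a : α) (l : List α) :
    (a :: l).sublists.countP p = l.sublists.countP p + l.sublists.countP (p ∘ cons a) := by
  rw [(sublists_perm_sublists' _).countP_eq, sublists'_cons, countP_append, countP_map,
    ← (sublists_perm_sublists' l).countP_eq, ← (sublists_perm_sublists' l).countP_eq]

theorem countP_sublists_concat (p : List α → Bool) (l : List α) (a : α) :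
    (l ++ [a]).sublists.countP p
      = l.sublists.countP p + l.sublists.countP (p ∘ (· ++ [a])) := by
  rw [sublists_concat, countP_append, countP_map]

theorem IsRotated.countP_sublists_eq {p : List α → Bool} (hp : ∀ u t, u ~r t → p u = p t)
    {l l' : List α} (h : l ~r l') : l.sublists.countP p = l'.sublists.countP p := by
  obtain ⟨n, rfl⟩ := h
  induction n with
  | zero => rw [rotate_zero]
  | succ n ih =>
    rw [ih, ← rotate_rotate]
    rcases l.rotate n with _ | ⟨a, t⟩
    · rfl
    · have hcons (u : List α) : p (a :: u) = p (u ++ [a]) := hp _ _ ⟨1, by simp⟩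
      rw [rotate_cons_succ, rotate_zero, countP_sublists_cons, countP_sublists_concat]
      congr 1
      exact countP_congr fun u _ => by simp [hcons]

end List

theorem Finset.sum_count_eq_countP {β : Type*} [BEq β] [LawfulBEq β] [DecidableEq β]
    (s : Finset β) (l : List β) : ∑ b ∈ s, l.count b = l.countP (· ∈ s) := by
  induction l with
  | nil => simp
  | cons a l ih => simp [List.count_cons, List.countP_cons, sum_add_distrib, ih]

theorem mem_conjClass_iff {α : Type*} [DecidableEq α] {w u : List α} :
    u ∈ conjClass w ↔ w ~r u := by
  rw [conjClass, Finset.mem_insert, Finset.mem_image]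
  constructor
  · rintro (rfl | ⟨n, -, rfl⟩)
    exacts [List.IsRotated.refl _, ⟨n, rfl⟩]
  · rintro h
    obtain ⟨n, hn, rfl⟩ := List.isRotated_iff_mod.mp h
    rcases hn.lt_or_eq with hn | rfl
    · exact .inr ⟨n, Finset.mem_range.mpr hn, rfl⟩
    · exact .inl (List.rotate_length w)

theorem sum_subwordCount_eq_countP {α : Type*} [DecidableEq α] (s : Finset (List α))
    (w : List α) : ∑ u ∈ s, subwordCount w u = w.sublists.countP (· ∈ s) :=
  s.sum_count_eq_countP w.sublists

/-- The direct count of occurrences of `v` as a subword of the circular word `[w]`,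
namely `∑_{u ∈ [v]} |w|_u`, does not depend on the chosen representative of `[w]`. -/
theorem stmt_1 {α : Type*} [DecidableEq α] (v w w' : List α)
    (h : w' ∈ conjClass w) :
    ∑ u ∈ conjClass v, subwordCount w u = ∑ u ∈ conjClass v, subwordCount w' u := by
  rw [sum_subwordCount_eq_countP, sum_subwordCount_eq_countP]
  refine (mem_conjClass_iff.mp h).countP_sublists_eq fun u t hut => ?_
  simp only [decide_eq_decide, mem_conjClass_iff]
  exact ⟨fun hu => hu.trans hut, fun ht => ht.trans hut.symm⟩
end

section
/- Let Σ = {a_1, a_2, …, a_s} be a finite alphabet and [w] a circular word over Σ. Then the sum over all permutations σ of {1,…,s} of the average subword count |[w]|_{a_{σ(1)}a_{σ(2)}⋯a_{σ(s)}} equals the product ∏_{i=1}^{s} |[w]|_{a_i}. -/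
/-!
All conjugates of `w` have the same letter counts, so it suffices to show, for one linear
word `u` and pairwise distinct letters `b₁, …, bₙ`, that
`∑_σ |u|_{b_{σ 1} ⋯ b_{σ n}} = ∏_k |u|_{b_k}`: both sides count the ways to choose one
position of `u` for each letter `b_k`, the permutation being the order in which the chosen
positions occur. By induction on `u = a :: u'`, the occurrences either avoid the first
position or start there with the unique `b_p = a`, matching the expansion of
`∏_k (|u'|_{b_k} + [b_k = a])`.
-/

open Equiv Function

theorem Fin.prod_univ_eq_mul_prod_swap_succ {M : Type*} [CommMonoid M] {m : ℕ}
    (f : Fin (m + 1) → M) (p : Fin (m + 1)) :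
    ∏ k, f k = f p * ∏ i : Fin m, f (swap 0 p i.succ) := by
  rw [← Equiv.prod_comp (swap 0 p) f, Fin.prod_univ_succ, swap_apply_left]

theorem Fin.prod_add_ite_eq {R : Type*} [CommSemiring R] {m : ℕ}
    (c : Fin (m + 1) → R) (p : Fin (m + 1)) :
    ∏ k, (c k + if k = p then 1 else 0) = ∏ k, c k + ∏ i : Fin m, c (swap 0 p i.succ) := by
  have hne (i : Fin m) : swap 0 p i.succ ≠ p := by
    rw [Ne, swap_apply_eq_iff, swap_apply_right]
    exact i.succ_ne_zero
  rw [prod_univ_eq_mul_prod_swap_succ _ p, prod_univ_eq_mul_prod_swap_succ c p]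
  simp only [if_true, hne, if_false, add_zero]
  ring

theorem Fin.prod_add_ite_apply_eq {α R : Type*} [DecidableEq α] [CommSemiring R] {m : ℕ}
    {V : Fin (m + 1) → α} (hV : Injective V) (a : α) (c : Fin (m + 1) → R) :
    ∏ k, (c k + if V k = a then 1 else 0)
      = ∏ k, c k + ∑ p, if V p = a then ∏ i : Fin m, c (swap 0 p i.succ) else 0 := by
  by_cases ha : ∃ p, V p = a
  · obtain ⟨p, rfl⟩ := ha
    simp only [hV.eq_iff, Finset.sum_ite_eq', Finset.mem_univ, if_true]
    exact prod_add_ite_eq c p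
  · push Not at ha
    simp [ha]

namespace List

variable {α : Type*} [DecidableEq α]

theorem subwordCount_eq_count_sublists' (w v : List α) :
    subwordCount w v = w.sublists'.count v :=
  (sublists_perm_sublists' w).count_eq v

@[simp]
theorem subwordCount_nil_right (w : List α) : subwordCount w [] = 1 := by
  induction w with
  | nil => rfl
  | cons a u ih =>
    rw [subwordCount_eq_count_sublists'] at *
    simp [sublists'_cons, count_append, ih, count_eq_zero]

@[simp]
theorem subwordCount_nil_cons (b : α) (v : List α) : subwordCount [] (b :: v) = 0 := by
  simp [subwordCount]

theorem subwordCount_cons_cons (a b : α) (u v : List α) :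
    subwordCount (a :: u) (b :: v)
      = subwordCount u (b :: v) + if b = a then subwordCount u v else 0 := by
  simp only [subwordCount_eq_count_sublists', sublists'_cons, count_append]
  split_ifs with h
  · subst h
    rw [count_map_of_injective _ _ cons_injective]
  · simp [count_eq_zero, Ne.symm h]

theorem count_cons_eq_add_ite (a b : α) (u : List α) :
    (a :: u).count b = u.count b + if b = a then 1 else 0 := by
  simp only [count_cons, beq_iff_eq, @eq_comm _ a b]

theorem subwordCount_singleton (w : List α) (b : α) : subwordCount w [b] = w.count b := by
  induction w with
  | nil => rfl
  | cons a u ih =>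
    rw [subwordCount_cons_cons, ih, subwordCount_nil_right, count_cons_eq_add_ite]

theorem sum_perm_subwordCount_cons_ofFn (a : α) (u : List α) {m : ℕ} (V : Fin (m + 1) → α) :
    ∑ σ : Equiv.Perm (Fin (m + 1)), subwordCount (a :: u) (ofFn fun k => V (σ k))
      = ∑ σ : Equiv.Perm (Fin (m + 1)), subwordCount u (ofFn fun k => V (σ k))
        + ∑ p, if V p = a then
            ∑ τ : Equiv.Perm (Fin m),
              subwordCount u (ofFn fun i => V (Equiv.swap 0 p (τ i).succ))
          else 0 := by
  simp only [ofFn_succ, subwordCount_cons_cons, Finset.sum_add_distrib]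
  congr 1
  rw [← Equiv.Perm.decomposeFin.symm.sum_comp, Fintype.sum_prod_type]
  simp only [Equiv.Perm.decomposeFin_symm_apply_zero, Equiv.Perm.decomposeFin_symm_apply_succ,
    Finset.sum_ite_irrel, Finset.sum_const_zero]

theorem sum_perm_subwordCount_ofFn (u : List α) {n : ℕ} {V : Fin n → α} (hV : Injective V) :
    ∑ σ : Equiv.Perm (Fin n), subwordCount u (ofFn fun k => V (σ k))
      = ∏ k, u.count (V k) := by
  induction u generalizing n with
  | nil =>
    cases n with
    | zero => simp
    | succ m => simp [ofFn_succ]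
  | cons a u ih =>
    cases n with
    | zero => simp
    | succ m =>
      have hV' (p : Fin (m + 1)) : Injective fun i : Fin m => V (Equiv.swap 0 p i.succ) :=
        hV.comp <| (Equiv.swap 0 p).injective.comp (Fin.succ_injective m)
      simp only [sum_perm_subwordCount_cons_ofFn, ih hV, ih (hV' _), count_cons_eq_add_ite]
      exact (Fin.prod_add_ite_apply_eq hV a _).symm

end List

section CircularWord

variable {α : Type*} [DecidableEq α]

theorem count_eq_of_mem_conjClass {w u : List α} (hu : u ∈ conjClass w) (b : α) :
    u.count b = w.count b := by
  obtain rfl | hu := Finset.mem_insert.mp hu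
  · rfl
  · obtain ⟨i, -, rfl⟩ := Finset.mem_image.mp hu
    exact (w.rotate_perm i).count_eq b

theorem sum_circCount_eq_of_forall_mem_conjClass {ι : Type*} (t : Finset ι) (v : ι → List α)
    {w : List α} {c : ℕ} (h : ∀ u ∈ conjClass w, ∑ j ∈ t, subwordCount u (v j) = c) :
    ∑ j ∈ t, circCount w (v j) = c := by
  have hcard : ((conjClass w).card : ℚ) ≠ 0 :=
    Nat.cast_ne_zero.mpr (Finset.card_ne_zero_of_mem (Finset.mem_insert_self w _))
  simp only [circCount, ← Finset.sum_div]
  rw [Finset.sum_comm, div_eq_iff hcard, Finset.sum_congr rfl fun u hu => by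
    rw [← Nat.cast_sum, h u hu]]
  simp [mul_comm]

theorem circCount_singleton (w : List α) (b : α) : circCount w [b] = w.count b := by
  simpa using sum_circCount_eq_of_forall_mem_conjClass {[b]} id fun u hu => by
    rw [Finset.sum_singleton, id, List.subwordCount_singleton, count_eq_of_mem_conjClass hu]

end CircularWord

/-- Theorem 14: for a circular word `[w]` over `{a_1, …, a_s} = Fin s`, the sum over all
permutations `σ` of the average subword counts `|[w]|_{a_{σ(1)} ⋯ a_{σ(s)}}` equals
`∏ i, |[w]|_{a_i}`. -/
theorem stmt_3 (s : ℕ) (w : List (Fin s)) :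
    ∑ σ : Equiv.Perm (Fin s), circCount w (List.ofFn fun k => σ k) =
      ∏ i : Fin s, circCount w [i] := by
  have hsum : ∀ u ∈ conjClass w,
      ∑ σ : Equiv.Perm (Fin s), subwordCount u (List.ofFn fun k => σ k) = ∏ i, w.count i :=
    fun u hu => (List.sum_perm_subwordCount_ofFn u injective_id).trans <|
      Finset.prod_congr rfl fun i _ => count_eq_of_mem_conjClass hu i
  simp only [sum_circCount_eq_of_forall_mem_conjClass _ _ hsum, circCount_singleton,
    Nat.cast_prod]
end

section
/- Let Σ be an ordered alphabet and w ∈ Σ*. Then the inverse of the Parikh matrix Ψ_Σ(w) equals the alternate Parikh matrix of the reverse of w: [Ψ_Σ(w)]^{−1} = \overline{Ψ}_Σ(mi(w)). -/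
/-!
Over the ordered alphabet, `Ψ(a_q) = 1 + E` with `E = E_{q,q+1}` and `E² = 0`, so
`Ψ(a_q)⁻¹ = 1 - E`, which is the alternate matrix of `Ψ(a_q)` because `q + (q + 1)` is odd.
Conjugating by the involution `diag((-1)^i)` shows that taking alternate matrices is
multiplicative, so `Ψ(w) · Ψ̄(mi(w))` telescopes to `1` letter by letter.
-/
section altMatrix

variable {n : ℕ}

lemma altMatrix_eq_diagonal_mul_mul_diagonal (A : Matrix (Fin n) (Fin n) ℚ) :
    altMatrix A = Matrix.diagonal (fun i => (-1 : ℚ) ^ i.val) * A *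
      Matrix.diagonal (fun i => (-1) ^ i.val) := by
  ext i j
  simp only [altMatrix, pow_add, Matrix.of_apply, Matrix.mul_diagonal, Matrix.diagonal_mul]
  ring

lemma diagonal_neg_one_pow_mul_self :
    Matrix.diagonal (fun i : Fin n => (-1 : ℚ) ^ i.val) *
      Matrix.diagonal (fun i => (-1) ^ i.val) = 1 := by
  simp [Matrix.diagonal_mul_diagonal, ← pow_add, ← two_mul, pow_mul]

lemma altMatrix_one : altMatrix (1 : Matrix (Fin n) (Fin n) ℚ) = 1 := by
  rw [altMatrix_eq_diagonal_mul_mul_diagonal, mul_one, diagonal_neg_one_pow_mul_self]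

lemma altMatrix_mul (A B : Matrix (Fin n) (Fin n) ℚ) :
    altMatrix (A * B) = altMatrix A * altMatrix B := by
  simp only [altMatrix_eq_diagonal_mul_mul_diagonal, Matrix.mul_assoc]
  rw [← Matrix.mul_assoc (Matrix.diagonal _) (Matrix.diagonal _), diagonal_neg_one_pow_mul_self,
    Matrix.one_mul]

lemma altMatrix_add (A B : Matrix (Fin n) (Fin n) ℚ) :
    altMatrix (A + B) = altMatrix A + altMatrix B := by
  ext i j
  simp [altMatrix, mul_add]

lemma altMatrix_single (i j : Fin n) (c : ℚ) :
    altMatrix (Matrix.single i j c) = Matrix.single i j ((-1) ^ (i.val + j.val) * c) := by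
  ext k l
  by_cases h : i = k ∧ j = l
  · obtain ⟨rfl, rfl⟩ := h
    simp [altMatrix]
  · simp [altMatrix, Matrix.single_apply, h]

end altMatrix

lemma altMatrix_parikhLetter {s : ℕ} (q : Fin s) :
    altMatrix (parikhLetter q) = 1 - Matrix.single q.castSucc q.succ 1 := by
  have hodd : (-1 : ℚ) ^ (q.castSucc.val + q.succ.val) = -1 := by
    rw [Fin.val_castSucc, Fin.val_succ, ← add_assoc, ← two_mul, pow_succ, pow_mul]
    norm_num
  rw [parikhLetter, altMatrix_add, altMatrix_one, altMatrix_single, hodd, neg_one_mul,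
    sub_eq_add_neg, Matrix.single_neg]

lemma parikhLetter_mul_altMatrix_parikhLetter {s : ℕ} (q : Fin s) :
    parikhLetter q * altMatrix (parikhLetter q) = 1 := by
  have hsq : Matrix.single q.castSucc q.succ (1 : ℚ) * Matrix.single q.castSucc q.succ 1 = 0 :=
    Matrix.single_mul_single_of_ne (h := (Fin.castSucc_lt_succ (i := q)).ne') ..
  rw [altMatrix_parikhLetter, parikhLetter, add_mul, mul_sub, mul_sub, hsq]
  simp

lemma parikhMatrix_nil {s : ℕ} : parikhMatrix ([] : List (Fin s)) = 1 := rfl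

lemma parikhMatrix_cons {s : ℕ} (a : Fin s) (w : List (Fin s)) :
    parikhMatrix (a :: w) = parikhLetter a * parikhMatrix w := by
  simp [parikhMatrix]

lemma parikhMatrix_append {s : ℕ} (u v : List (Fin s)) :
    parikhMatrix (u ++ v) = parikhMatrix u * parikhMatrix v := by
  simp [parikhMatrix]

lemma parikhMatrix_singleton {s : ℕ} (a : Fin s) : parikhMatrix [a] = parikhLetter a := by
  simp [parikhMatrix]

lemma parikhMatrix_mul_altMatrix_reverse {s : ℕ} (w : List (Fin s)) :
    parikhMatrix w * altMatrix (parikhMatrix w.reverse) = 1 := by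
  induction w with
  | nil => rw [List.reverse_nil, parikhMatrix_nil, altMatrix_one, mul_one]
  | cons a w ih =>
    rw [List.reverse_cons, parikhMatrix_cons, parikhMatrix_append, parikhMatrix_singleton,
      altMatrix_mul, Matrix.mul_assoc, ← Matrix.mul_assoc (parikhMatrix w), ih, Matrix.one_mul,
      parikhLetter_mul_altMatrix_parikhLetter]

/-- Theorem 19: the inverse of the Parikh matrix of `w` is the alternate Parikh matrix of the
reverse (mirror image) of `w`: `[Ψ_Σ(w)]⁻¹ = Ψ̄_Σ(mi(w))`. -/
theorem stmt_6 {s : ℕ} (w : List (Fin s)) :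
    (parikhMatrix w)⁻¹ = altMatrix (parikhMatrix w.reverse) :=
  Matrix.inv_eq_right_inv (parikhMatrix_mul_altMatrix_reverse w)
end

section
/- Let Σ = {a, b} and let w ∈ Σ* be a primitive word of length n. For 0 ≤ i ≤ n−1 let w_i denote the i-th cyclic shift of w. Then 2·Σ_{i=0}^{n−1} |w_i|_{ab} = n·|w|_a·|w|_b. -/
/-!
Writing `w = u v` with `|u| = i`, the shift `w_i = v u` differs from `w` only in the pairs split
between `u` and `v`, so `|w_i|_{ab} = |w|_{ab} + |w|_a |u|_b - |w|_b |u|_a`. Summing over `i`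
leaves sums of letter counts over the prefixes of `w`; over a binary alphabet these are tied to
`|w|_{ab}` by `2 |w|_{ab} + |w|_a² = 2 ∑_i |w[0,i)|_a + |w|_a` and, since every prefix of length
`i` has `i` letters, add up to `n (n - 1) / 2`.
-/

open Finset

section Subwords

variable {α : Type*} [DecidableEq α]

theorem subwordCount_eq_count_sublists' (w v : List α) : subwordCount w v = w.sublists'.count v :=
  (List.sublists_perm_sublists' w).count_eq v

theorem subwordCount_nil_left (x : α) (v : List α) : subwordCount [] (x :: v) = 0 := by
  simp [subwordCount]

theorem subwordCount_cons_cons (c x : α) (w v : List α) :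
    subwordCount (c :: w) (x :: v) =
      subwordCount w (x :: v) + if c = x then subwordCount w v else 0 := by
  simp only [subwordCount_eq_count_sublists', List.sublists'_cons, List.count_append]
  congr 1
  split_ifs with h
  · subst h
    exact List.count_map_of_injective _ _ List.cons_injective v
  · exact List.count_eq_zero_of_not_mem (by simp [h])

theorem subwordCount_singleton (w : List α) (x : α) : subwordCount w [x] = w.count x := by
  induction w with
  | nil => simp [subwordCount]
  | cons c w ih =>
    rw [subwordCount_cons_cons, ih, subwordCount_nil_right, List.count_cons]
    by_cases h : c = x <;> simp [h]

theorem subwordCount_pair_append (s t : List α) (a b : α) :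
    subwordCount (s ++ t) [a, b] =
      subwordCount s [a, b] + subwordCount t [a, b] + s.count a * t.count b := by
  induction s with
  | nil => simp [subwordCount_nil_left]
  | cons c s ih =>
    rw [List.cons_append, subwordCount_cons_cons, subwordCount_cons_cons, ih,
      subwordCount_singleton, subwordCount_singleton, List.count_append, List.count_cons]
    by_cases h : c = a
    · simp [h]
      ring
    · simp [h]

theorem subwordCount_pair_rotate (w : List α) (a b : α) {i : ℕ} (hi : i ≤ w.length) :
    (subwordCount (w.rotate i) [a, b] : ℤ) =
      subwordCount w [a, b] + w.count a * (w.take i).count b - w.count b * (w.take i).count a := by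
  have hsplit := subwordCount_pair_append (w.take i) (w.drop i) a b
  have hshift := subwordCount_pair_append (w.drop i) (w.take i) a b
  rw [List.take_append_drop] at hsplit
  rw [List.rotate_eq_drop_append_take hi, hshift]
  have hcount (x : α) : w.count x = (w.take i).count x + (w.drop i).count x := by
    rw [← List.count_append, List.take_append_drop]
  rw [hsplit, hcount a, hcount b]
  push_cast
  ring

end Subwords

theorem count_zero_add_count_one (w : List (Fin 2)) : w.count 0 + w.count 1 = w.length := by
  induction w with
  | nil => rfl
  | cons c w ih =>
    rw [List.count_cons, List.count_cons, List.length_cons]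
    fin_cases c <;> simp <;> omega

theorem two_mul_sum_count_take_add_length (w : List (Fin 2)) :
    2 * ∑ i ∈ range w.length, ((w.take i).count 0 + (w.take i).count 1) + w.length =
      w.length * w.length := by
  have hprefix : ∀ i ∈ range w.length, (w.take i).count 0 + (w.take i).count 1 = i := by
    intro i hi
    rw [count_zero_add_count_one, List.length_take, min_eq_left (mem_range.mp hi).le]
  rw [sum_congr rfl hprefix, mul_comm, sum_range_id_mul_two]
  rcases w.length with _ | n
  · rfl
  · simp only [Nat.add_sub_cancel]
    ring

theorem two_mul_subwordCount_zero_one (w : List (Fin 2)) :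
    2 * subwordCount w [0, 1] + w.count 0 * w.count 0 =
      2 * ∑ i ∈ range w.length, (w.take i).count 0 + w.count 0 := by
  induction w using List.reverseRecOn with
  | nil => simp [subwordCount_nil_left]
  | append_singleton w c ih =>
    have hprefix : ∀ i ∈ range w.length, ((w ++ [c]).take i).count 0 = (w.take i).count 0 :=
      fun i hi => by rw [List.take_append_of_le_length (mem_range.mp hi).le]
    rw [subwordCount_pair_append, List.length_append, List.length_singleton, sum_range_succ,
      sum_congr rfl hprefix, List.take_left, List.count_append]
    fin_cases c <;> simp [subwordCount_cons_cons, subwordCount_nil_left] <;> nlinarith [ih]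

theorem stmt_12_general (w : List (Fin 2)) :
    2 * ∑ i ∈ Finset.range w.length, subwordCount (w.rotate i) [0, 1] =
      w.length * w.count 0 * w.count 1 := by
  have hrotate : ∀ i ∈ range w.length, (subwordCount (w.rotate i) [0, 1] : ℤ) =
      subwordCount w [0, 1] + w.count 0 * (w.take i).count 1 - w.count 1 * (w.take i).count 0 :=
    fun i hi => subwordCount_pair_rotate w 0 1 (mem_range.mp hi).le
  have hpair := two_mul_subwordCount_zero_one w
  have hprefixes := two_mul_sum_count_take_add_length w
  have hlength := count_zero_add_count_one w
  rw [sum_add_distrib] at hprefixes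
  zify at hpair hprefixes hlength ⊢
  rw [sum_congr rfl hrotate]
  simp only [sum_sub_distrib, sum_add_distrib, ← mul_sum, sum_const, card_range, nsmul_eq_mul]
  linear_combination (w.length : ℤ) * hpair + (w.count 0 : ℤ) * hprefixes
    - (2 * (∑ i ∈ range w.length, ((w.take i).count 0 : ℤ)) + w.length * w.count 0) * hlength

/-- The key computation in the proof of Theorem 25: for a primitive word `w` over
`{a, b} = Fin 2` of length `n`, twice the sum over the cyclic shifts `w_i` of `|w_i|_{ab}`
equals `n · |w|_a · |w|_b`. -/
theorem stmt_12 (w : List (Fin 2))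
    (hprim : ∀ (v : List (Fin 2)) (k : ℕ), 2 ≤ k → w ≠ (List.replicate k v).flatten) :
    2 * ∑ i ∈ Finset.range w.length, subwordCount (w.rotate i) [0, 1] =
      w.length * w.count 0 * w.count 1 :=
  stmt_12_general w
end

section
/- Let Σ = {a < b} be the binary ordered alphabet and u, v ∈ Σ*. Then Ψ_Σ([uv]) = Ψ_Σ([u])·Ψ_Σ([v]) if and only if |u|_a·|v|_b = |v|_a·|u|_b. -/
/-! The Parikh matrix of a binary word `w` is unitriangular with superdiagonal `|w|_a, |w|_b` and
corner `|w|_ab`. Each conjugate of `w` occurs equally often among its `|w|` rotations, so `Ψ([w])`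
is the average of `Ψ` over the rotations, and over the rotations `|w|_ab` averages to exactly
`|w|_a |w|_b / 2`: rotating by `j` changes `|w|_ab` by `|w|_a |x|_b - |w|_b |x|_a` with `x` the
prefix of length `j`, and the prefix counts sum to `|w|_ab + C(|w|_a, 2)` and
`|w|_ba + C(|w|_b, 2)`. So `Ψ([w])` only depends on the Parikh vector, and comparing the corners of
`Ψ([uv])` and `Ψ([u]) Ψ([v])` leaves `(|v|_a |u|_b - |u|_a |v|_b) / 2 = 0`. -/

namespace CircularParikh

open Finset

section Rotations

variable {α : Type*} [DecidableEq α]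

lemma conjClass_eq_image_rotate {w : List α} (hw : w ≠ []) :
    conjClass w = (range w.length).image w.rotate :=
  insert_eq_of_mem <| mem_image.mpr ⟨0, mem_range.mpr (List.length_pos_iff.mpr hw), w.rotate_zero⟩

lemma card_filter_rotate_eq_rotate (w : List α) {i : ℕ} (hi : i < w.length) :
    #{j ∈ range w.length | w.rotate j = w.rotate i} = #{j ∈ range w.length | w.rotate j = w} := by
  set n := w.length
  have hn : 0 < n := by omega
  apply card_bij' (fun j _ => (j + (n - i)) % n) (fun t _ => (t + i) % n)
  · intro j hj
    simp only [mem_filter, mem_range] at hj ⊢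
    refine ⟨Nat.mod_lt _ hn, ?_⟩
    rw [List.rotate_mod, ← List.rotate_rotate, hj.2, List.rotate_rotate,
      Nat.add_sub_cancel' hi.le, List.rotate_length]
  · intro t ht
    simp only [mem_filter, mem_range] at ht ⊢
    exact ⟨Nat.mod_lt _ hn, by rw [List.rotate_mod, ← List.rotate_rotate, ht.2]⟩
  · intro j hj
    simp only [mem_filter, mem_range] at hj
    rw [Nat.mod_add_mod, add_assoc, Nat.sub_add_cancel hi.le, Nat.add_mod_right,
      Nat.mod_eq_of_lt hj.1]
  · intro t ht
    simp only [mem_filter, mem_range] at ht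
    rw [Nat.mod_add_mod, add_assoc, Nat.add_sub_cancel' hi.le, Nat.add_mod_right,
      Nat.mod_eq_of_lt ht.1]

lemma sum_range_rotate {M : Type*} [AddCommMonoid M] (w : List α) (f : List α → M) :
    ∑ j ∈ range w.length, f (w.rotate j)
      = #{j ∈ range w.length | w.rotate j = w} • ∑ u ∈ conjClass w, f u := by
  rcases eq_or_ne w [] with rfl | hw
  · simp
  rw [sum_comp, conjClass_eq_image_rotate hw, smul_sum]
  refine sum_congr rfl fun u hu => ?_
  obtain ⟨i, hi, rfl⟩ := mem_image.mp hu
  rw [card_filter_rotate_eq_rotate w (mem_range.mp hi)]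

lemma inv_card_conjClass_smul_sum {M : Type*} [AddCommGroup M] [Module ℚ M] {w : List α}
    (hw : w ≠ []) (f : List α → M) :
    (#(conjClass w) : ℚ)⁻¹ • ∑ u ∈ conjClass w, f u
      = (w.length : ℚ)⁻¹ • ∑ j ∈ range w.length, f (w.rotate j) := by
  set h := #{j ∈ range w.length | w.rotate j = w}
  have hh : (h : ℚ) ≠ 0 := by
    refine Nat.cast_ne_zero.mpr (card_ne_zero_of_mem (a := 0) ?_)
    simp [List.length_pos_iff.mpr hw]
  have hlen : (w.length : ℚ) = h * #(conjClass w) := by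
    exact_mod_cast by simpa using sum_range_rotate w fun _ => (1 : ℕ)
  rw [sum_range_rotate, hlen, ← Nat.cast_smul_eq_nsmul ℚ, smul_smul, mul_inv_rev, mul_assoc,
    inv_mul_cancel₀ hh, mul_one]

end Rotations

def unitri (a b c : ℚ) : Matrix (Fin 3) (Fin 3) ℚ :=
  !![1, a, c; 0, 1, b; 0, 0, 1]

lemma unitri_zero : unitri 0 0 0 = 1 := by
  ext i j
  fin_cases i <;> fin_cases j <;> rfl

lemma unitri_mul (a b c a' b' c' : ℚ) :
    unitri a b c * unitri a' b' c' = unitri (a + a') (b + b') (c + c' + a * b') := by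
  ext i j
  fin_cases i <;> fin_cases j <;> simp [unitri, Matrix.mul_apply, Fin.sum_univ_three] <;> ring

lemma unitri_inj {a b c a' b' c' : ℚ} :
    unitri a b c = unitri a' b' c' ↔ a = a' ∧ b = b' ∧ c = c' := by
  refine ⟨fun h => ⟨?_, ?_, ?_⟩, fun ⟨ha, hb, hc⟩ => ha ▸ hb ▸ hc ▸ rfl⟩
  · simpa [unitri] using congrFun₂ h 0 1
  · simpa [unitri] using congrFun₂ h 1 2
  · simpa [unitri] using congrFun₂ h 0 2

lemma inv_smul_sum_unitri {n : ℕ} (hn : n ≠ 0) (a b : ℚ) (c : ℕ → ℚ) :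
    (n : ℚ)⁻¹ • ∑ j ∈ range n, unitri a b (c j) = unitri a b ((n : ℚ)⁻¹ * ∑ j ∈ range n, c j) := by
  ext i j
  fin_cases i <;> fin_cases j <;> simp [unitri, Matrix.sum_apply, hn]

lemma parikhLetter_zero : parikhLetter (0 : Fin 2) = unitri 1 0 0 := by
  ext i j
  fin_cases i <;> fin_cases j <;> simp [parikhLetter, unitri]

lemma parikhLetter_one : parikhLetter (1 : Fin 2) = unitri 0 1 0 := by
  ext i j
  fin_cases i <;> fin_cases j <;> simp [parikhLetter, unitri]

lemma count_zero_add_count_one (w : List (Fin 2)) : w.count 0 + w.count 1 = w.length := by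
  induction w with
  | nil => rfl
  | cons c t ih =>
    obtain rfl | rfl : c = 0 ∨ c = 1 := by omega
    all_goals simp; omega

def abCount : List (Fin 2) → ℕ
  | [] => 0
  | c :: t => (if c = 0 then t.count 1 else 0) + abCount t

lemma parikhMatrix_eq_unitri (w : List (Fin 2)) :
    parikhMatrix w = unitri (w.count 0) (w.count 1) (abCount w) := by
  induction w with
  | nil => exact unitri_zero.symm
  | cons c t ih =>
    rw [parikhMatrix, List.map_cons, List.prod_cons, ← parikhMatrix, ih]
    obtain rfl | rfl : c = 0 ∨ c = 1 := by omega
    · rw [parikhLetter_zero, unitri_mul]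
      simp [abCount, add_comm]
    · rw [parikhLetter_one, unitri_mul]
      simp [abCount, add_comm]

lemma abCount_append (x y : List (Fin 2)) :
    abCount (x ++ y) = abCount x + abCount y + x.count 0 * y.count 1 := by
  induction x with
  | nil => simp [abCount]
  | cons c t ih =>
    obtain rfl | rfl : c = 0 ∨ c = 1 := by omega
    · simp [abCount, ih]; ring
    · simp [abCount, ih]

lemma abCount_rotate (w : List (Fin 2)) {j : ℕ} (hj : j ≤ w.length) :
    abCount (w.rotate j) + w.count 1 * (w.take j).count 0
      = abCount w + w.count 0 * (w.take j).count 1 := by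
  obtain ⟨x, y, rfl, rfl⟩ : ∃ x y, w = x ++ y ∧ x.length = j :=
    ⟨w.take j, w.drop j, (List.take_append_drop j w).symm, List.length_take_of_le hj⟩
  simp only [List.rotate_append_length_eq, List.take_left, abCount_append, List.count_append]
  ring

lemma sum_count_zero_take (w : List (Fin 2)) :
    2 * ∑ j ∈ range w.length, (w.take j).count 0 + w.count 0 = 2 * abCount w + w.count 0 ^ 2 := by
  induction w with
  | nil => simp [abCount]
  | cons c t ih =>
    rw [List.length_cons, sum_range_succ']
    have hlen := count_zero_add_count_one t
    obtain rfl | rfl : c = 0 ∨ c = 1 := by omega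
    all_goals (simp [abCount, sum_add_distrib, ← hlen] at ih ⊢; linear_combination ih)

lemma sum_count_one_take (w : List (Fin 2)) :
    2 * ∑ j ∈ range w.length, (w.take j).count 1 + 2 * abCount w + w.count 1
      = 2 * (w.count 0 * w.count 1) + w.count 1 ^ 2 := by
  induction w with
  | nil => simp [abCount]
  | cons c t ih =>
    rw [List.length_cons, sum_range_succ']
    have hlen := count_zero_add_count_one t
    obtain rfl | rfl : c = 0 ∨ c = 1 := by omega
    all_goals (simp [abCount, sum_add_distrib, ← hlen] at ih ⊢; linear_combination ih)

lemma two_mul_sum_abCount_rotate (w : List (Fin 2)) :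
    2 * ∑ j ∈ range w.length, abCount (w.rotate j) = w.length * (w.count 0 * w.count 1) := by
  have hrot := sum_congr rfl fun j hj => abCount_rotate w (mem_range.mp hj).le
  rw [sum_add_distrib, sum_add_distrib, ← mul_sum, ← mul_sum, sum_const, card_range,
    smul_eq_mul] at hrot
  have h0 := sum_count_zero_take w
  have h1 := sum_count_one_take w
  have hlen := count_zero_add_count_one w
  zify at hrot h0 h1 hlen ⊢
  linear_combination 2 * hrot - (w.count 1 : ℤ) * h0 + (w.count 0 : ℤ) * h1
    + ((w.count 0 : ℤ) * w.count 1 - 2 * abCount w) * hlen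

lemma circParikh_eq_unitri (w : List (Fin 2)) :
    circParikh w = unitri (w.count 0) (w.count 1) (w.count 0 * w.count 1 / 2) := by
  rcases eq_or_ne w [] with rfl | hw
  · simp [circParikh, conjClass, parikhMatrix, unitri_zero]
  have hrot (j : ℕ) : parikhMatrix (w.rotate j)
      = unitri (w.count 0) (w.count 1) (abCount (w.rotate j)) := by
    rw [parikhMatrix_eq_unitri, (w.rotate_perm j).count_eq, (w.rotate_perm j).count_eq]
  have hn : w.length ≠ 0 := List.length_pos_iff.mpr hw |>.ne'
  have hsum : (2 : ℚ) * ∑ j ∈ range w.length, (abCount (w.rotate j) : ℚ)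
      = w.length * (w.count 0 * w.count 1) := by
    exact_mod_cast two_mul_sum_abCount_rotate w
  rw [circParikh, inv_card_conjClass_smul_sum hw, sum_congr rfl fun j _ => hrot j,
    inv_smul_sum_unitri hn]
  congr 1
  field_simp
  linear_combination hsum

end CircularParikh

open CircularParikh in
/-- Corollary 28: for words `u, v` over `{a < b} = Fin 2`,
`Ψ_Σ([uv]) = Ψ_Σ([u]) · Ψ_Σ([v])` if and only if `|u|_a|v|_b = |v|_a|u|_b`
(the weak ratio property). -/
theorem stmt_13 (u v : List (Fin 2)) :
    circParikh (u ++ v) = circParikh u * circParikh v ↔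
      u.count 0 * v.count 1 = v.count 0 * u.count 1 := by
  rw [circParikh_eq_unitri, circParikh_eq_unitri u, circParikh_eq_unitri v, unitri_mul,
    unitri_inj, ← Nat.cast_inj (R := ℚ)]
  simp only [List.count_append, Nat.cast_add, Nat.cast_mul, true_and]
  constructor <;> intro h <;> linarith
end
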